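/- Let X be a locally path connected and semilocally simply connected topological space. Then the following are equivalent: (1) X is Hausdorff; (2) Π₁(X) with the CO' topology is Hausdorff; (3) the path-homotopy relation ∼ is a closed subset of P(X) × P(X) (with the product of compact-open topologies). -/

import Mathlib

open unitInterval

noncomputable section

variable {X : Type*} [TopologicalSpace X]

/-- The path-homotopy (homotopy relative to `{0,1}`) relation on `C(I, X)`. -/
def pRel (f g : C(I, X)) : Prop := f.HomotopicRel g {0, 1}

/-- The path-homotopy setoid on `C(I, X)`. -/
def pSetoid (X : Type*) [TopologicalSpace X] : Setoid C(I, X) :=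
  ⟨pRel, ContinuousMap.HomotopicRel.equivalence⟩

/-- The fundamental groupoid `Π₁(X)` as the quotient of the path space `P(X) = C(I, X)`
(with the compact-open topology) by path homotopy; it carries the quotient (CO') topology. -/
abbrev Pi1 (X : Type*) [TopologicalSpace X] := Quotient (pSetoid X)

/-- The quotient map `q : P(X) → Π₁(X)`. -/
def pq : C(I, X) → Pi1 X := Quotient.mk (pSetoid X)

theorem pRel.endpts {f g : C(I, X)} (h : pRel f g) {t : I} (ht : t ∈ ({0, 1} : Set I)) :
    f t = g t := h.some.fst_eq_snd ht

/-- The source map `s : Π₁(X) → X`, `[γ] ↦ γ(0)`. -/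
def srcMap : Pi1 X → X :=
  Quotient.lift (fun f : C(I, X) => f 0) fun _ _ h =>
    pRel.endpts h (by simp)

/-- The range map `r : Π₁(X) → X`, `[γ] ↦ γ(1)`. -/
def rngMap : Pi1 X → X :=
  Quotient.lift (fun f : C(I, X) => f 1) fun _ _ h =>
    pRel.endpts h (by simp)

/-- A continuous map `I → X` regarded as a `Path` between its endpoints. -/
def toPath (f : C(I, X)) : Path (f 0) (f 1) := ⟨f, rfl, rfl⟩

/-- Concatenation `α ⧠ β` of paths: traverse `β` first and then `α`
(given `β 1 = α 0`). -/
def concat (α β : C(I, X)) (h : β 1 = α 0) : C(I, X) :=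
  ((toPath β).trans ((toPath α).cast h rfl)).toContinuousMap

@[simp] theorem concat_zero (α β : C(I, X)) (h : β 1 = α 0) : concat α β h 0 = β 0 :=
  ((toPath β).trans ((toPath α).cast h rfl)).source

@[simp] theorem concat_one (α β : C(I, X)) (h : β 1 = α 0) : concat α β h 1 = α 1 :=
  ((toPath β).trans ((toPath α).cast h rfl)).target

/-- The set `N([γ], U, V) = {[δ ⧠ γ ⧠ θ] : δ a path in U with δ 0 = γ 1,
θ a path in V with θ 1 = γ 0}` in `Π₁(X)`. -/
def Nhd (a : Pi1 X) (U V : Set X) : Set (Pi1 X) :=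
  { b | ∃ (γ δ θ : C(I, X)) (h₁ : θ 1 = γ 0) (h₂ : γ 1 = δ 0),
      pq γ = a ∧ Set.range δ ⊆ U ∧ Set.range θ ⊆ V ∧
      b = pq (concat δ (concat γ θ h₁) ((concat_one γ θ h₁).trans h₂)) }

/-- A subset `U ⊆ X` is relatively inessential in `X` if every loop in `U` is
null-homotopic (path-homotopic to a constant path) in `X`. -/
def RelInessential (X : Type*) [TopologicalSpace X] (U : Set X) : Prop :=
  ∀ γ : C(I, X), Set.range γ ⊆ U → γ 1 = γ 0 →
    pRel γ (ContinuousMap.const I (γ 0))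

/-- `X` is semilocally simply connected if every point has a relatively inessential
open neighbourhood. -/
def SemilocSimplyConnected (X : Type*) [TopologicalSpace X] : Prop :=
  ∀ x : X, ∃ U : Set X, IsOpen U ∧ x ∈ U ∧ RelInessential X U


/-!
The source and range maps `Π₁(X) → X` are continuous, so when `X` is Hausdorff, classes with
different endpoints are separated. For non-homotopic `γ, γ'` with common endpoints, take
relatively inessential open sets `U ∋ γ 1`, `V ∋ γ 0`: inside `U` (resp. `V`) any two paths
with the same endpoints are homotopic, so a common element `[θ γ δ] = [θ' γ' δ']` of the two
sets `N(·, U, V)` cancels to `γ ∼ γ'`. These sets are open: on each interval `[t k, t (k+1)]`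
of a fine partition, `γ` and every nearby `f` stay in one relatively inessential open set
`W k`; joining `γ (t k)` to `f (t k)` by short paths `p k`, each square
`(p k)⁻¹ · γ|[t k, t (k+1)] · p (k+1)` is homotopic to `f|[t k, t (k+1)]`, and the squares
telescope to `f ∼ θ · γ · δ`. Conversely, `∼` is the preimage of the diagonal of `Π₁(X)` under
`q × q`, and the diagonal of `X` is the preimage of `∼` under `x ↦ const x`, which gives
(2) ⇒ (3) ⇒ (1).
-/

open Set Filter Topology

namespace Path.Homotopic.Quotient

variable {x₀ x₁ x₂ : X}

@[simp] theorem trans_symm_trans (γ : Path.Homotopic.Quotient x₀ x₁)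
    (δ : Path.Homotopic.Quotient x₀ x₂) : γ.trans (γ.symm.trans δ) = δ := by
  rw [← trans_assoc, trans_symm, refl_trans]

@[simp] theorem symm_trans_trans (γ : Path.Homotopic.Quotient x₀ x₁)
    (δ : Path.Homotopic.Quotient x₁ x₂) : γ.symm.trans (γ.trans δ) = δ := by
  rw [← trans_assoc, symm_trans, refl_trans]

theorem trans_cancel_left {θ : Path.Homotopic.Quotient x₀ x₁}
    {γ γ' : Path.Homotopic.Quotient x₁ x₂} (h : θ.trans γ = θ.trans γ') : γ = γ' := by
  simpa using congrArg θ.symm.trans h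

theorem trans_cancel_right {δ : Path.Homotopic.Quotient x₁ x₂}
    {γ γ' : Path.Homotopic.Quotient x₀ x₁} (h : γ.trans δ = γ'.trans δ) : γ = γ' := by
  simpa using congrArg (·.trans δ.symm) h

end Path.Homotopic.Quotient

theorem Path.range_subpath_subset_of_mapsTo {x y : X} {γ : Path x y} {a b : I} (hab : a ≤ b)
    {W : Set X} (h : MapsTo γ (Icc a b) W) : range (γ.subpath a b) ⊆ W := by
  rw [Path.range_subpath_of_le _ _ _ hab]
  exact h.image_subset

namespace Pi1

theorem pq_eq_pq_iff {f g : C(I, X)} : pq f = pq g ↔ pRel f g :=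
  Quotient.eq

theorem continuous_pq : Continuous (pq : C(I, X) → Pi1 X) :=
  continuous_coinduced_rng

theorem continuous_srcMap : Continuous (srcMap : Pi1 X → X) :=
  continuous_quot_lift _ (continuous_eval_const 0)

theorem continuous_rngMap : Continuous (rngMap : Pi1 X → X) :=
  continuous_quot_lift _ (continuous_eval_const 1)

variable {x y z x' y' z' : X}

/-- Unlike `Path.Homotopic.Quotient x y`, this class forgets the endpoints from the type, so
casts of paths along equalities of endpoints do not change it. -/
def ofPath (γ : Path x y) : Pi1 X := pq γ.toContinuousMap

theorem ofPath_eq_ofPath_iff {γ γ' : Path x y} : ofPath γ = ofPath γ' ↔ γ.Homotopic γ' :=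
  Quotient.eq

theorem exists_ofPath (a : Pi1 X) : ∃ (x y : X) (γ : Path x y), ofPath γ = a :=
  Quotient.inductionOn a fun f => ⟨_, _, toPath f, rfl⟩

@[simp] theorem srcMap_ofPath (γ : Path x y) : srcMap (ofPath γ) = x := γ.source

@[simp] theorem rngMap_ofPath (γ : Path x y) : rngMap (ofPath γ) = y := γ.target

theorem eq_of_ofPath_eq {γ : Path x y} {γ' : Path x' y'} (h : ofPath γ = ofPath γ') :
    x = x' ∧ y = y' := by
  simpa using And.intro (congrArg srcMap h) (congrArg rngMap h)

theorem ofPath_trans_congr {γ : Path x y} {γ' : Path x' y'} {δ : Path y z} {δ' : Path y' z'}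
    (hγ : ofPath γ = ofPath γ') (hδ : ofPath δ = ofPath δ') :
    ofPath (γ.trans δ) = ofPath (γ'.trans δ') := by
  obtain ⟨rfl, rfl⟩ := eq_of_ofPath_eq hγ
  obtain ⟨-, rfl⟩ := eq_of_ofPath_eq hδ
  exact ofPath_eq_ofPath_iff.mpr
    ((ofPath_eq_ofPath_iff.mp hγ).hcomp (ofPath_eq_ofPath_iff.mp hδ))

theorem ofPath_subpath_zero_one (γ : Path x y) {a b : I} (ha : a = 0) (hb : b = 1) :
    ofPath (γ.subpath a b) = ofPath γ := by
  subst ha hb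
  rw [Path.subpath_zero_one]
  rfl

end Pi1

open Pi1

variable {x y x' y' : X}

theorem RelInessential.homotopic {W : Set X} (hW : RelInessential X W) {γ γ' : Path x y}
    (hγ : range γ ⊆ W) (hγ' : range γ' ⊆ W) : γ.Homotopic γ' := by
  have hloop : pRel (γ.trans γ'.symm).toContinuousMap (ContinuousMap.const I x) := by
    simpa using hW (γ.trans γ'.symm).toContinuousMap
      (by simpa [Path.trans_range, Path.symm_range] using union_subset hγ hγ') (by simp)
  change (γ.trans γ'.symm).Homotopic (Path.refl x) at hloop
  rw [← Path.Homotopic.Quotient.eq] at hloop ⊢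
  simpa using congrArg (·.trans (Path.Homotopic.Quotient.mk γ')) hloop

theorem exists_subpath_homotopic_conj {γ : Path x y} {ρ : Path x' y'} {t : ℕ → I}
    (ht : Monotone t) {W E : ℕ → Set X} (hW : ∀ k, RelInessential X (W k)) (n : ℕ)
    (hγ : ∀ k < n, MapsTo γ (Icc (t k) (t (k + 1))) (W k))
    (hρ : ∀ k < n, MapsTo ρ (Icc (t k) (t (k + 1))) (W k))
    (hE : ∀ k < n, E k ⊆ W k ∧ E (k + 1) ⊆ W k)
    (hjoin : ∀ k ≤ n, JoinedIn (E k) (γ (t k)) (ρ (t k)))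
    (p₀ : Path (γ (t 0)) (ρ (t 0))) (hp₀ : range p₀ ⊆ E 0) :
    ∃ q : Path (γ (t n)) (ρ (t n)), range q ⊆ E n ∧
      (ρ.subpath (t 0) (t n)).Homotopic (p₀.symm.trans ((γ.subpath (t 0) (t n)).trans q)) := by
  induction n with
  | zero =>
    refine ⟨p₀, hp₀, ?_⟩
    rw [← Path.Homotopic.Quotient.eq]
    simp
  | succ n ih =>
    obtain ⟨q, hqE, hq⟩ := ih (fun k hk => hγ k (by omega)) (fun k hk => hρ k (by omega))
      (fun k hk => hE k (by omega)) (fun k hk => hjoin k (by omega))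
    obtain ⟨hEn, hEn'⟩ := hE n n.lt_succ_self
    let q' := (hjoin (n + 1) le_rfl).somePath
    have hq'E : range q' ⊆ E (n + 1) := fun _ ⟨s, hs⟩ => hs ▸ JoinedIn.somePath_mem _ s
    have hsquare : (ρ.subpath (t n) (t (n + 1))).Homotopic
        (q.symm.trans ((γ.subpath (t n) (t (n + 1))).trans q')) := by
      refine (hW n).homotopic
        (Path.range_subpath_subset_of_mapsTo (ht n.le_succ) (hρ n n.lt_succ_self)) ?_
      simp only [Path.trans_range, Path.symm_range]
      exact union_subset (hqE.trans hEn) (union_subset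
        (Path.range_subpath_subset_of_mapsTo (ht n.le_succ) (hγ n n.lt_succ_self))
        (hq'E.trans hEn'))
    refine ⟨q', hq'E, ?_⟩
    have hρsplit : Path.Homotopic _ _ := ⟨.subpathTransSubpath ρ (t 0) (t n) (t (n + 1))⟩
    have hγsplit : Path.Homotopic _ _ := ⟨.subpathTransSubpath γ (t 0) (t n) (t (n + 1))⟩
    rw [← Path.Homotopic.Quotient.eq] at hq hsquare hρsplit hγsplit ⊢
    simp only [Path.Homotopic.Quotient.mk_trans] at hq hsquare hρsplit hγsplit ⊢
    rw [← hρsplit, ← hγsplit, hq, hsquare]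
    simp

theorem SemilocSimplyConnected.exists_partition (hX : SemilocSimplyConnected X)
    (γ : Path x y) :
    ∃ (t : ℕ → I) (n : ℕ) (W : ℕ → Set X), t 0 = 0 ∧ Monotone t ∧ t n = 1 ∧
      ∀ k, IsOpen (W k) ∧ RelInessential X (W k) ∧ MapsTo γ (Icc (t k) (t (k + 1))) (W k) := by
  choose W hWo hmem hWi using hX
  obtain ⟨t, ht0, hmono, ⟨n, hn⟩, hcover⟩ := exists_monotone_Icc_subset_open_cover_unitInterval
    (c := fun z => γ ⁻¹' W z) (fun z => (hWo z).preimage γ.continuous)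
    (fun s _ => mem_iUnion.mpr ⟨γ s, hmem (γ s)⟩)
  choose ι hι using hcover
  exact ⟨t, n, fun k => W (ι k), ht0, hmono, hn n le_rfl,
    fun k => ⟨hWo _, hWi _, fun s hs => hι k hs⟩⟩

theorem SemilocSimplyConnected.eventually_pq_eq_ofPath_trans [LocallyPathConnectedSpace X]
    (hX : SemilocSimplyConnected X) (γ : Path x y) {U V : Set X} (hU : U ∈ 𝓝 y)
    (hV : V ∈ 𝓝 x) :
    ∀ᶠ f in 𝓝 γ.toContinuousMap, ∃ (x' y' : X) (θ : Path x' x) (δ : Path y y'),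
      range θ ⊆ V ∧ range δ ⊆ U ∧ pq f = ofPath ((θ.trans γ).trans δ) := by
  obtain ⟨t, n, W, ht0, hmono, htn, hW⟩ := hX.exists_partition γ
  choose hWo hWi hγW using hW
  -- the connecting path at `t k` must lie in the two sets `W` adjacent to `t k`, and in `V`
  -- (resp. `U`) at the first (resp. last) point; at `k = 0`, `W (k - 1)` is just `W 0`
  let E k := W k ∩ W (k - 1) ∩ (if k = 0 then V else univ) ∩ (if k = n then U else univ)
  have hE : ∀ k, E k ∈ 𝓝 (γ (t k)) := by
    intro k
    have hW : γ (t k) ∈ W k ∩ W (k - 1) := by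
      refine ⟨hγW k ⟨le_rfl, hmono k.le_succ⟩, ?_⟩
      rcases k with _ | k
      · exact hγW 0 ⟨le_rfl, hmono (Nat.zero_le 1)⟩
      · exact hγW k ⟨hmono k.le_succ, le_rfl⟩
    refine inter_mem (inter_mem (((hWo k).inter (hWo _)).mem_nhds hW) ?_) ?_
    · split_ifs with hk
      · rwa [hk, ht0, γ.source]
      · exact univ_mem
    · split_ifs with hk
      · rwa [hk, htn, γ.target]
      · exact univ_mem
  have hmaps : ∀ᶠ f : C(I, X) in 𝓝 γ.toContinuousMap,
      ∀ k < n, MapsTo f (Icc (t k) (t (k + 1))) (W k) :=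
    (eventually_all_finite (finite_lt_nat n)).mpr fun k _ =>
      ContinuousMap.eventually_mapsTo isCompact_Icc (hWo k) (hγW k)
  have hjoin : ∀ᶠ f : C(I, X) in 𝓝 γ.toContinuousMap,
      ∀ k ≤ n, JoinedIn (E k) (γ (t k)) (f (t k)) :=
    (eventually_all_finite (finite_le_nat n)).mpr fun k _ =>
      (continuous_eval_const (t k)).continuousAt.eventually (pathComponentIn_mem_nhds (hE k))
  filter_upwards [hmaps, hjoin] with f hf hj
  let p₀ := (hj 0 n.zero_le).somePath
  have hp₀ : range p₀ ⊆ E 0 := fun _ ⟨s, hs⟩ => hs ▸ JoinedIn.somePath_mem _ s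
  obtain ⟨q, hqE, hq⟩ := exists_subpath_homotopic_conj (ρ := toPath f) hmono hWi n
    (fun k _ => hγW k) hf (fun k _ => ⟨fun _ h => h.1.1.1, fun _ h => h.1.1.2⟩) hj p₀ hp₀
  let θ := p₀.symm.cast rfl (by rw [ht0, γ.source])
  let δ := q.cast (by rw [htn, γ.target]) rfl
  refine ⟨_, _, θ, δ, ?_, ?_, ?_⟩
  · simp only [θ, Path.cast_coe, Path.symm_range]
    exact fun z hz => by simpa using (hp₀ hz).1.2
  · simp only [δ, Path.cast_coe]
    exact fun z hz => by simpa using (hqE hz).2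
  · calc pq f = ofPath ((toPath f).subpath (t 0) (t n)) :=
          (ofPath_subpath_zero_one (toPath f) ht0 htn).symm
      _ = ofPath (p₀.symm.trans ((γ.subpath (t 0) (t n)).trans q)) :=
        ofPath_eq_ofPath_iff.mpr hq
      _ = ofPath (θ.trans (γ.trans δ)) :=
        ofPath_trans_congr rfl (ofPath_trans_congr (ofPath_subpath_zero_one γ ht0 htn) rfl)
      _ = ofPath ((θ.trans γ).trans δ) :=
        ofPath_eq_ofPath_iff.mpr (Path.Homotopic.trans_assoc _ _ _).symm

theorem mem_Nhd_iff {a b : Pi1 X} {U V : Set X} :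
    b ∈ Nhd a U V ↔ ∃ (x y x' y' : X) (γ : Path x y) (θ : Path x' x) (δ : Path y y'),
      ofPath γ = a ∧ range θ ⊆ V ∧ range δ ⊆ U ∧ b = ofPath ((θ.trans γ).trans δ) := by
  constructor
  · rintro ⟨γ, δ, θ, h₁, h₂, rfl, hδ, hθ, rfl⟩
    exact ⟨_, _, _, _, toPath γ, (toPath θ).cast rfl h₁.symm, (toPath δ).cast h₂ rfl,
      rfl, hθ, hδ, rfl⟩
  · rintro ⟨x, y, x', y', γ, θ, δ, rfl, hθ, hδ, rfl⟩
    exact ⟨γ.toContinuousMap, δ.toContinuousMap, θ.toContinuousMap, by simp, by simp,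
      rfl, hδ, hθ, rfl⟩

theorem mem_Nhd_self (γ : Path x y) {U V : Set X} (hy : y ∈ U) (hx : x ∈ V) :
    ofPath γ ∈ Nhd (ofPath γ) U V :=
  mem_Nhd_iff.mpr ⟨_, _, _, _, γ, Path.refl x, Path.refl y, rfl, by simpa, by simpa,
    ofPath_eq_ofPath_iff.mpr (((Path.Homotopic.refl_trans γ).hcomp (.refl _)).trans
      (Path.Homotopic.trans_refl γ)).symm⟩

theorem disjoint_Nhd {U V : Set X} (hU : RelInessential X U) (hV : RelInessential X V)
    {γ γ' : Path x y} (h : ¬ γ.Homotopic γ') :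
    Disjoint (Nhd (ofPath γ) U V) (Nhd (ofPath γ') U V) := by
  refine disjoint_left.mpr fun b hb hb' => h ?_
  obtain ⟨x₁, y₁, x₂, y₂, γ₁, θ₁, δ₁, hγ₁, hθ₁, hδ₁, rfl⟩ := mem_Nhd_iff.mp hb
  obtain ⟨x₃, y₃, x₄, y₄, γ₂, θ₂, δ₂, hγ₂, hθ₂, hδ₂, hb₂⟩ := mem_Nhd_iff.mp hb'
  obtain ⟨rfl, rfl⟩ := eq_of_ofPath_eq hγ₁
  obtain ⟨rfl, rfl⟩ := eq_of_ofPath_eq hγ₂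
  obtain ⟨rfl, rfl⟩ := eq_of_ofPath_eq hb₂
  have hθ := hV.homotopic hθ₁ hθ₂
  have hδ := hU.homotopic hδ₁ hδ₂
  rw [ofPath_eq_ofPath_iff] at hγ₁ hγ₂ hb₂
  rw [← Path.Homotopic.Quotient.eq] at hθ hδ hγ₁ hγ₂ hb₂ ⊢
  simp only [Path.Homotopic.Quotient.mk_trans, hθ, hδ] at hb₂
  rw [← hγ₁, ← hγ₂]
  exact Path.Homotopic.Quotient.trans_cancel_left
    (Path.Homotopic.Quotient.trans_cancel_right hb₂)

theorem isOpen_Nhd [LocallyPathConnectedSpace X] (hX : SemilocSimplyConnected X) (a : Pi1 X)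
    {U V : Set X} (hU : IsOpen U) (hV : IsOpen V) : IsOpen (Nhd a U V) := by
  rw [isOpen_coinduced, isOpen_iff_mem_nhds]
  intro f hf
  obtain ⟨x₀, y₀, ρ, rfl⟩ : ∃ (x₀ y₀ : X) (ρ : Path x₀ y₀), ρ.toContinuousMap = f :=
    ⟨_, _, toPath f, rfl⟩
  obtain ⟨x, y, x', y', γ, θ, δ, rfl, hθ, hδ, hρ⟩ := mem_Nhd_iff.mp hf
  obtain ⟨rfl, rfl⟩ := eq_of_ofPath_eq hρ
  have hρ' := Path.Homotopic.Quotient.eq.mpr (ofPath_eq_ofPath_iff.mp hρ)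
  filter_upwards [hX.eventually_pq_eq_ofPath_trans ρ (hU.mem_nhds (hδ ⟨1, δ.target⟩))
    (hV.mem_nhds (hθ ⟨0, θ.source⟩))] with g ⟨_, _, θ', δ', hθ', hδ', hg⟩
  refine mem_Nhd_iff.mpr ⟨_, _, _, _, γ, θ'.trans θ, δ.trans δ', rfl, ?_, ?_, ?_⟩
  · simpa [Path.trans_range] using union_subset hθ' hθ
  · simpa [Path.trans_range] using union_subset hδ hδ'
  · refine hg.trans ?_
    rw [ofPath_eq_ofPath_iff, ← Path.Homotopic.Quotient.eq]
    simp only [Path.Homotopic.Quotient.mk_trans] at hρ' ⊢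
    simp [hρ']

theorem t2Space_pi1 [T2Space X] [LocallyPathConnectedSpace X] (hX : SemilocSimplyConnected X) :
    T2Space (Pi1 X) := by
  refine ⟨fun a b hab => ?_⟩
  obtain ⟨x, y, γ, rfl⟩ := exists_ofPath a
  obtain ⟨x', y', γ', rfl⟩ := exists_ofPath b
  by_cases hends : (x, y) = (x', y')
  · obtain ⟨rfl, rfl⟩ := Prod.ext_iff.mp hends
    obtain ⟨U, hUo, hyU, hU⟩ := hX y
    obtain ⟨V, hVo, hxV, hV⟩ := hX x
    exact ⟨_, _, isOpen_Nhd hX _ hUo hVo, isOpen_Nhd hX _ hUo hVo, mem_Nhd_self γ hyU hxV,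
      mem_Nhd_self γ' hyU hxV, disjoint_Nhd hU hV (mt ofPath_eq_ofPath_iff.mpr hab)⟩
  · exact separated_by_continuous (continuous_srcMap.prodMk continuous_rngMap)
      (by simpa using hends)

theorem pRel_const_iff :
    pRel (ContinuousMap.const I x) (ContinuousMap.const I y) ↔ x = y :=
  ⟨fun h => pRel.endpts h (t := 0) (by simp), fun h => h ▸ ContinuousMap.HomotopicRel.refl _⟩

theorem isClosed_setOf_pRel [T2Space (Pi1 X)] :
    IsClosed { p : C(I, X) × C(I, X) | pRel p.1 p.2 } := by
  have : { p : C(I, X) × C(I, X) | pRel p.1 p.2 } = Prod.map pq pq ⁻¹' diagonal (Pi1 X) := by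
    ext
    exact pq_eq_pq_iff.symm
  rw [this]
  exact isClosed_diagonal.preimage (continuous_pq.prodMap continuous_pq)

theorem t2Space_of_isClosed_setOf_pRel
    (h : IsClosed { p : C(I, X) × C(I, X) | pRel p.1 p.2 }) : T2Space X := by
  have : diagonal X = Prod.map (ContinuousMap.const I) (ContinuousMap.const I) ⁻¹'
      { p : C(I, X) × C(I, X) | pRel p.1 p.2 } := by
    ext
    exact pRel_const_iff.symm
  rw [t2_iff_isClosed_diagonal, this]
  exact h.preimage (ContinuousMap.continuous_const'.prodMap ContinuousMap.continuous_const')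

/-- For a locally path connected, semilocally simply connected `X`, the
following are equivalent: `X` is Hausdorff; `Π₁(X)` with the CO' topology is Hausdorff;
the path-homotopy relation is a closed subset of `P(X) × P(X)`. -/
theorem stmt15 {X : Type*} [TopologicalSpace X] [LocallyPathConnectedSpace X]
    (hX : SemilocSimplyConnected X) :
    (T2Space X ↔ T2Space (Pi1 X)) ∧
      (T2Space X ↔ IsClosed { p : C(I, X) × C(I, X) | pRel p.1 p.2 }) := by
  have h12 : T2Space X → T2Space (Pi1 X) := fun _ => t2Space_pi1 hX
  have h23 : T2Space (Pi1 X) → IsClosed { p : C(I, X) × C(I, X) | pRel p.1 p.2 } :=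
    fun _ => isClosed_setOf_pRel
  exact ⟨⟨h12, t2Space_of_isClosed_setOf_pRel ∘ h23⟩,
    ⟨h23 ∘ h12, t2Space_of_isClosed_setOf_pRel⟩⟩

end
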